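/- arXiv:2309.07325 — 5 statements merged into one kernel-verified Lean document; each statement's English description precedes it below -/
import Mathlib

section
/- Two 2D lattices A and B with invertible structure matrices A, B ∈ GL(2,ℝ) have a full-rank common sublattice (coincident site lattice) if and only if the transition matrix T = A⁻¹B has all rational entries. -/
/-- The lattice generated by a 2×2 real structure matrix `M`: the set `{M z : z ∈ ℤ²}`. -/
def latt (M : Matrix (Fin 2) (Fin 2) ℝ) : Set (Fin 2 → ℝ) :=
  {v | ∃ z : Fin 2 → ℤ, v = M.mulVec (fun i => (z i : ℝ))}

/-- A set of vectors in ℝ² is full rank if it contains two linearly independent vectors. -/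
def FullRankSet (S : Set (Fin 2 → ℝ)) : Prop :=
  ∃ v ∈ S, ∃ w ∈ S, LinearIndependent ℝ ![v, w]

/-- A matrix is rational if all its entries are rational numbers. -/
def IsRatMat (T : Matrix (Fin 2) (Fin 2) ℝ) : Prop :=
  ∀ i j, ∃ q : ℚ, T i j = (q : ℝ)

/-!
If the columns of an invertible matrix `X` lie in both lattices, then `X = A Z = B W` with
integer matrices `Z`, `W`, and `W` is invertible, so `A⁻¹ B = Z W⁻¹` is rational. Conversely, if
`N (A⁻¹ B) = Z` is integral for some integer `N ≠ 0`, then the columns of `N B = A Z = B (N I)`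
are linearly independent and lie in both lattices.
-/

namespace Matrix

theorem exists_intCast_eq_smul {m n : Type*} [Finite m] [Finite n] (Q : Matrix m n ℚ) :
    ∃ N : ℤ, N ≠ 0 ∧ ∃ Z : Matrix m n ℤ, Z.map (↑) = (N : ℚ) • Q := by
  obtain ⟨⟨N, hN⟩, hZ⟩ :=
    IsLocalization.exist_integer_multiples_of_finite (nonZeroDivisors ℤ) fun p : m × n => Q p.1 p.2
  choose Z hZ using hZ
  refine ⟨N, nonZeroDivisors.ne_zero hN, of fun i j => Z (i, j), ?_⟩
  ext i j
  simpa [zsmul_eq_mul] using hZ (i, j)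

variable {n : Type*} [Fintype n] [DecidableEq n]

theorem map_nonsing_inv {R S : Type*} [CommRing R] [CommRing S] (f : R →+* S)
    {C : Matrix n n R} (hC : IsUnit C.det) : C⁻¹.map f = (C.map f)⁻¹ :=
  (inv_eq_right_inv <| by rw [← Matrix.map_mul, mul_nonsing_inv C hC]; simp).symm

theorem eq_map_mul_inv_of_mul_map_eq {K L : Type*} [Field K] [Field L] (f : K →+* L)
    {T : Matrix n n L} {C D : Matrix n n K} (hC : IsUnit (C.map f))
    (h : T * C.map f = D.map f) : T = (D * C⁻¹).map f := by
  have hCdet : IsUnit C.det := by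
    rw [isUnit_iff_isUnit_det, ← RingHom.mapMatrix_apply, ← RingHom.map_det,
      isUnit_iff_ne_zero, map_ne_zero] at hC
    exact hC.isUnit
  rw [Matrix.map_mul, map_nonsing_inv f hCdet, ← h, Matrix.mul_assoc,
    mul_nonsing_inv _ ((isUnit_iff_isUnit_det _).mp hC), Matrix.mul_one]

end Matrix

open Matrix

theorem isRatMat_iff_exists_map {T : Matrix (Fin 2) (Fin 2) ℝ} :
    IsRatMat T ↔ ∃ Q : Matrix (Fin 2) (Fin 2) ℚ, Q.map (↑) = T := by
  refine ⟨fun h => ?_, fun ⟨Q, hQ⟩ i j => ⟨Q i j, by rw [← hQ, map_apply]⟩⟩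
  choose Q hQ using h
  exact ⟨of Q, by ext i j; exact (hQ i j).symm⟩

theorem forall_col_mem_latt_iff {M X : Matrix (Fin 2) (Fin 2) ℝ} :
    (∀ j, X.col j ∈ latt M) ↔ ∃ Z : Matrix (Fin 2) (Fin 2) ℤ, M * Z.map (↑) = X := by
  constructor
  · intro h
    choose z hz using h
    refine ⟨of fun i j => z j i, ?_⟩
    ext i j
    simpa [mul_apply, mulVec, dotProduct] using (congrFun (hz j) i).symm
  · rintro ⟨Z, rfl⟩ j
    refine ⟨Z.col j, ?_⟩
    ext i
    simp [mul_apply, mulVec, dotProduct]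

theorem fullRankSet_iff_exists_isUnit {S : Set (Fin 2 → ℝ)} :
    FullRankSet S ↔ ∃ X : Matrix (Fin 2) (Fin 2) ℝ, IsUnit X ∧ ∀ j, X.col j ∈ S := by
  constructor
  · rintro ⟨v, hv, w, hw, hvw⟩
    exact ⟨(of ![v, w])ᵀ, linearIndependent_cols_iff_isUnit.mp hvw,
      Fin.forall_fin_two.mpr ⟨hv, hw⟩⟩
  · rintro ⟨X, hX, hXS⟩
    refine ⟨X.col 0, hXS 0, X.col 1, hXS 1, ?_⟩
    have hcols : ![X.col 0, X.col 1] = X.col := by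
      ext j : 1
      fin_cases j <;> rfl
    rw [hcols]
    exact linearIndependent_cols_iff_isUnit.mpr hX

section

variable {A B : Matrix (Fin 2) (Fin 2) ℝ}

theorem isRatMat_of_fullRankSet_inter (hA : IsUnit A.det)
    (h : FullRankSet (latt A ∩ latt B)) : IsRatMat (A⁻¹ * B) := by
  obtain ⟨X, hX, hXAB⟩ := fullRankSet_iff_exists_isUnit.mp h
  obtain ⟨Z, hZ⟩ := forall_col_mem_latt_iff.mp fun j => (hXAB j).1
  obtain ⟨W, hW⟩ := forall_col_mem_latt_iff.mp fun j => (hXAB j).2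
  have hT : A⁻¹ * B * W.map (↑) = Z.map (↑) := by
    rw [Matrix.mul_assoc, hW, ← hZ, ← Matrix.mul_assoc, nonsing_inv_mul A hA, Matrix.one_mul]
  refine isRatMat_iff_exists_map.mpr ⟨_, (eq_map_mul_inv_of_mul_map_eq (Rat.castHom ℝ)
    (C := W.map (↑)) (D := Z.map (↑)) ?_ ?_).symm⟩
  · simpa [map_map, Function.comp_def] using isUnit_of_mul_isUnit_right (hW ▸ hX)
  · simpa [map_map, Function.comp_def] using hT

theorem fullRankSet_inter_of_isRatMat (hA : IsUnit A.det) (hB : IsUnit B.det)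
    (h : IsRatMat (A⁻¹ * B)) : FullRankSet (latt A ∩ latt B) := by
  obtain ⟨Q, hQ⟩ := isRatMat_iff_exists_map.mp h
  obtain ⟨N, hN, Z, hZ⟩ := Q.exists_intCast_eq_smul
  have hZT : Z.map (↑) = (N : ℝ) • (A⁻¹ * B) := by
    rw [← hQ]
    ext i j
    simpa using congrArg ((↑) : ℚ → ℝ) (congrFun (congrFun hZ i) j)
  refine fullRankSet_iff_exists_isUnit.mpr ⟨(N : ℝ) • B, ?_,
    fun j => ⟨forall_col_mem_latt_iff.mpr ⟨Z, ?_⟩ j, forall_col_mem_latt_iff.mpr ⟨N, ?_⟩ j⟩⟩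
  · rw [isUnit_iff_isUnit_det, det_smul, isUnit_iff_ne_zero]
    exact mul_ne_zero (pow_ne_zero _ (Int.cast_ne_zero.mpr hN)) hB.ne_zero
  · rw [hZT, Matrix.mul_smul, mul_nonsing_inv_cancel_left A B hA]
  · rw [Matrix.map_intCast Int.cast_zero]
    ext i j
    simp [mul_comm]

end

/-- Two 2D lattices have a full-rank coincident site lattice iff the transition
matrix `T = A⁻¹B` is rational. -/
theorem csl_exists_iff_rational_transition
    (A B : Matrix (Fin 2) (Fin 2) ℝ) (hA : IsUnit A.det) (hB : IsUnit B.det) :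
    FullRankSet (latt A ∩ latt B) ↔ IsRatMat (A⁻¹ * B) :=
  ⟨isRatMat_of_fullRankSet_inter hA, fullRankSet_inter_of_isRatMat hA hB⟩
end

section
/- Let 𝒜 and ℬ be 2D lattices with rational transition matrix. Define the DSCL 𝒟 as the lattice generated by 𝒜 ∪ ℬ (i.e., the set of all sums a + b with a ∈ 𝒜, b ∈ ℬ). Then 𝒟 is a lattice (discrete full-rank subgroup of ℝ²) containing both 𝒜 and ℬ, and it is the smallest such lattice. -/
theorem exists_intCast_eq_smul_of_forall_ratCast {α : Type*} [Finite α] {x : α → ℝ}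
    (hx : ∀ a, ∃ q : ℚ, x a = q) : ∃ n : ℤ, n ≠ 0 ∧ ∃ z : α → ℤ, ∀ a, n • x a = z a := by
  choose q hq using hx
  obtain ⟨⟨n, hn⟩, hz⟩ := IsLocalization.exist_integer_multiples_of_finite (nonZeroDivisors ℤ) q
  choose z hz using hz
  refine ⟨n, nonZeroDivisors.ne_zero hn, z, fun a => ?_⟩
  rw [hq, zsmul_eq_mul, ← Rat.cast_intCast (z a), ← eq_intCast (algebraMap ℤ ℚ), hz a]
  simp

theorem Submodule.exists_det_ne_zero_range_mulVecLin_eq {ι : Type*} [Fintype ι] [DecidableEq ι]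
    (G : Submodule ℤ (ι → ℤ)) {n : ℤ} (hn : n ≠ 0) (hG : ∀ z, n • z ∈ G) :
    ∃ S : Matrix ι ι ℤ, S.det ≠ 0 ∧ LinearMap.range S.mulVecLin = G := by
  have hrank : Module.finrank ℤ G = Fintype.card ι := by
    refine le_antisymm (by simpa using G.finrank_le) ?_
    have hle : LinearMap.range (n • LinearMap.id : (ι → ℤ) →ₗ[ℤ] (ι → ℤ)) ≤ G := by
      rintro _ ⟨z, rfl⟩
      exact hG z
    have hinj : Function.Injective (n • LinearMap.id : (ι → ℤ) →ₗ[ℤ] (ι → ℤ)) :=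
      fun _ _ h => smul_right_injective _ hn h
    simpa [LinearMap.finrank_range_of_inj hinj] using Submodule.finrank_mono hle
  let b : Module.Basis ι ℤ G :=
    (Module.finBasisOfFinrankEq ℤ G hrank).reindex (Fintype.equivFin ι).symm
  let f : (ι → ℤ) →ₗ[ℤ] (ι → ℤ) := G.subtype ∘ₗ b.equivFun.symm.toLinearMap
  have hf : Function.Injective f := G.injective_subtype.comp b.equivFun.symm.injective
  refine ⟨LinearMap.toMatrix' f, ?_, ?_⟩
  · rw [Ne, ← Matrix.exists_mulVec_eq_zero_iff]
    rintro ⟨v, hv0, hv⟩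
    refine hv0 (hf ?_)
    rw [map_zero, ← hv, ← Matrix.toLin'_apply, Matrix.toLin'_toMatrix']
  · rw [← Matrix.toLin'_apply', Matrix.toLin'_toMatrix', LinearMap.range_comp,
      LinearEquiv.range, Submodule.map_top, Submodule.range_subtype]

namespace Matrix

section intMulVecLin

variable {m n ι : Type*} [Fintype n]

def intMulVecLin (M : Matrix m n ℝ) : (n → ℤ) →ₗ[ℤ] (m → ℝ) :=
  M.mulVecLin.restrictScalars ℤ ∘ₗ (Int.castAddHom ℝ).toIntLinearMap.compLeft n

@[simp]
theorem intMulVecLin_apply (M : Matrix m n ℝ) (z : n → ℤ) :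
    M.intMulVecLin z = M *ᵥ fun i => (z i : ℝ) := rfl

theorem intMulVecLin_mul_map_intCast [Fintype ι] (M : Matrix m n ℝ) (S : Matrix n ι ℤ) :
    (M * S.map ((↑) : ℤ → ℝ)).intMulVecLin = M.intMulVecLin ∘ₗ S.mulVecLin := by
  ext z : 1
  simp only [intMulVecLin_apply, LinearMap.comp_apply, mulVecLin_apply, ← mulVec_mulVec]
  congr 1
  ext i
  exact (RingHom.map_mulVec (Int.castRingHom ℝ) S z i).symm

theorem range_intMulVecLin_mul_map_intCast [Fintype ι] (M : Matrix m n ℝ) (S : Matrix n ι ℤ) :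
    LinearMap.range (M * S.map ((↑) : ℤ → ℝ)).intMulVecLin =
      (LinearMap.range S.mulVecLin).map M.intMulVecLin := by
  rw [intMulVecLin_mul_map_intCast, LinearMap.range_comp]

end intMulVecLin

theorem exists_range_intMulVecLin_eq_sup {ι : Type*} [Fintype ι] [DecidableEq ι]
    {A B : Matrix ι ι ℝ} (hA : IsUnit A.det) (hAB : ∀ i j, ∃ q : ℚ, (A⁻¹ * B) i j = q) :
    ∃ D : Matrix ι ι ℝ, IsUnit D.det ∧
      LinearMap.range D.intMulVecLin =
        LinearMap.range A.intMulVecLin ⊔ LinearMap.range B.intMulVecLin := by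
  obtain ⟨n, hn, z, hz⟩ := exists_intCast_eq_smul_of_forall_ratCast
    (x := fun p : ι × ι => (A⁻¹ * B) p.1 p.2) fun p => hAB p.1 p.2
  have hn' : (n : ℝ) ≠ 0 := Int.cast_ne_zero.mpr hn
  let N : Matrix ι ι ℤ := of fun i j => z (i, j)
  let A' := (n : ℝ)⁻¹ • A
  have hAA' : A = A' * (n • (1 : Matrix ι ι ℤ)).map (↑) := by
    have hcast : (n • (1 : Matrix ι ι ℤ)).map ((↑) : ℤ → ℝ) = (n : ℝ) • 1 := by
      ext i j
      simp only [map_apply, smul_apply, one_apply]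
      split_ifs <;> simp
    rw [hcast, Matrix.mul_smul, Matrix.mul_one, smul_smul, mul_inv_cancel₀ hn', one_smul]
  have hBA' : B = A' * N.map (↑) := by
    have hcast : N.map ((↑) : ℤ → ℝ) = (n : ℝ) • (A⁻¹ * B) := by
      ext i j
      simp [N, ← hz (i, j)]
    rw [hcast, smul_mul_smul, inv_mul_cancel₀ hn', one_smul, ← Matrix.mul_assoc,
      mul_nonsing_inv A hA, Matrix.one_mul]
  obtain ⟨S, hS, hSG⟩ := (LinearMap.range (n • (1 : Matrix ι ι ℤ)).mulVecLin ⊔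
      LinearMap.range N.mulVecLin).exists_det_ne_zero_range_mulVecLin_eq hn
    fun z => Submodule.mem_sup_left ⟨z, by simp⟩
  refine ⟨A' * S.map (↑), ?_, ?_⟩
  · rw [det_mul, det_smul, ← Int.cast_det]
    exact ((IsUnit.mk0 _ (pow_ne_zero _ (inv_ne_zero hn'))).mul hA).mul
      (IsUnit.mk0 _ (Int.cast_ne_zero.mpr hS))
  · conv_rhs => rw [hAA', hBA']
    rw [range_intMulVecLin_mul_map_intCast, range_intMulVecLin_mul_map_intCast,
      range_intMulVecLin_mul_map_intCast, ← Submodule.map_sup, hSG]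

end Matrix

theorem latt_eq_range_intMulVecLin (M : Matrix (Fin 2) (Fin 2) ℝ) :
    latt M = LinearMap.range M.intMulVecLin :=
  Set.ext fun _ => exists_congr fun _ => eq_comm

theorem dscl_is_smallest_lattice_containing_both_general
    (A B : Matrix (Fin 2) (Fin 2) ℝ) (hA : IsUnit A.det)
    (hT : IsRatMat (A⁻¹ * B)) :
    ∃ D : Matrix (Fin 2) (Fin 2) ℝ, IsUnit D.det ∧
      latt D = {x | ∃ a ∈ latt A, ∃ b ∈ latt B, x = a + b} ∧
      latt A ⊆ latt D ∧ latt B ⊆ latt D ∧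
      ∀ L : Matrix (Fin 2) (Fin 2) ℝ, IsUnit L.det →
        latt A ⊆ latt L → latt B ⊆ latt L → latt D ⊆ latt L := by
  obtain ⟨D, hD, hsup⟩ := Matrix.exists_range_intMulVecLin_eq_sup hA hT
  refine ⟨D, hD, ?_⟩
  simp only [latt_eq_range_intMulVecLin, SetLike.coe_subset_coe, hsup]
  refine ⟨?_, le_sup_left, le_sup_right, fun _ _ => sup_le⟩
  rw [Submodule.coe_sup]
  ext x
  simp only [Set.mem_add, eq_comm]
  rfl

/-- The DSCL `𝒟 = 𝒜 + ℬ = {a + b : a ∈ 𝒜, b ∈ ℬ}` is a lattice (i.e., of the form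
`Dℤ²` for some invertible `D`) containing both `𝒜` and `ℬ`, and it is the smallest
lattice with this property. -/
theorem dscl_is_smallest_lattice_containing_both
    (A B : Matrix (Fin 2) (Fin 2) ℝ) (hA : IsUnit A.det) (hB : IsUnit B.det)
    (hT : IsRatMat (A⁻¹ * B)) :
    ∃ D : Matrix (Fin 2) (Fin 2) ℝ, IsUnit D.det ∧
      latt D = {x | ∃ a ∈ latt A, ∃ b ∈ latt B, x = a + b} ∧
      latt A ⊆ latt D ∧ latt B ⊆ latt D ∧
      ∀ L : Matrix (Fin 2) (Fin 2) ℝ, IsUnit L.det →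
        latt A ⊆ latt L → latt B ⊆ latt L → latt D ⊆ latt L :=
  dscl_is_smallest_lattice_containing_both_general A B hA hT
end

section
/- For 2D lattices 𝒜, ℬ with rational transition matrix, with CSL 𝒞 = 𝒜 ∩ ℬ and DSCL 𝒟 = 𝒜 + ℬ, the covolumes satisfy det(C)·det(D) = det(A)·det(B), where C, D, A, B are structure matrices of the respective lattices and det denotes absolute determinant (unit cell area). -/
namespace Matrix

variable {ι : Type*} [Fintype ι]

theorem exists_eq_mul_map_of_forall_col [DecidableEq ι] {R S : Type*} [Semiring R]
    (f : S → R) (E F : Matrix ι ι R) (h : ∀ j, ∃ z : ι → S, F *ᵥ (f ∘ z) = E.col j) :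
    ∃ K : Matrix ι ι S, E = F * K.map f := by
  choose z hz using h
  refine ⟨(of z)ᵀ, ext_of_mulVec_single fun j => ?_⟩
  rw [← mulVec_mulVec, mulVec_single_one, mulVec_single_one, ← hz]
  rfl

theorem det_ne_zero_of_index_range_mulVecLin_ne_zero [DecidableEq ι] {K : Matrix ι ι ℤ}
    (h : (LinearMap.range K.mulVecLin).toAddSubgroup.index ≠ 0) : K.det ≠ 0 := by
  set k := (LinearMap.range K.mulVecLin).toAddSubgroup.index
  -- `k ℤⁿ ⊆ K ℤⁿ` since the quotient `ℤⁿ ⧸ K ℤⁿ` has order `k`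
  obtain ⟨Z, hZ⟩ : ∃ Z : Matrix ι ι ℤ, diagonal (fun _ => (k : ℤ)) = K * Z.map id := by
    refine exists_eq_mul_map_of_forall_col id _ K fun j => ?_
    obtain ⟨z, hz⟩ := AddSubgroup.nsmul_index_mem (LinearMap.range K.mulVecLin).toAddSubgroup
      (Pi.single j 1)
    refine ⟨z, ?_⟩
    rw [col_diagonal, ← nsmul_one, Pi.single_smul']
    exact hz
  intro hK
  simpa [det_mul, hK, h] using congrArg det hZ

theorem index_range_mulVecLin [DecidableEq ι] (K : Matrix ι ι ℤ) :
    (LinearMap.range K.mulVecLin).toAddSubgroup.index = K.det.natAbs := by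
  by_cases hK : K.det = 0
  · rw [hK, Int.natAbs_zero]
    by_contra h
    exact det_ne_zero_of_index_range_mulVecLin_ne_zero h hK
  have hinj : Function.Injective K.mulVecLin :=
    (injective_iff_map_eq_zero _).2 fun _ => eq_zero_of_mulVec_eq_zero hK
  let b := (Pi.basisFun ℤ ι).map (LinearEquiv.ofInjective _ hinj)
  have hcard := Submodule.natAbs_det_basis_change (Pi.basisFun ℤ ι) _ b
  rw [Pi.basisFun_det_apply] at hcard
  show Nat.card ((ι → ℤ) ⧸ LinearMap.range K.mulVecLin) = _
  rw [← hcard, ← det_transpose K]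
  congr
  ext i j
  simp [b]

def latticeHom (E : Matrix ι ι ℝ) : (ι → ℤ) →+ (ι → ℝ) :=
  E.mulVecLin.toAddMonoidHom.comp ((Int.castAddHom ℝ).compLeft ι)

theorem latticeHom_apply (E : Matrix ι ι ℝ) (z : ι → ℤ) :
    latticeHom E z = E *ᵥ fun i => (z i : ℝ) := rfl

def lattice (E : Matrix ι ι ℝ) : AddSubgroup (ι → ℝ) := (latticeHom E).range

theorem latticeHom_mul_map (E : Matrix ι ι ℝ) (K : Matrix ι ι ℤ) :
    latticeHom (E * K.map (↑)) = (latticeHom E).comp K.mulVecLin.toAddMonoidHom := by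
  ext z : 1
  rw [AddMonoidHom.comp_apply, latticeHom_apply, latticeHom_apply, ← mulVec_mulVec]
  congr 1
  ext i
  exact ((Int.castRingHom ℝ).map_mulVec K z i).symm

theorem lattice_mul_map (E : Matrix ι ι ℝ) (K : Matrix ι ι ℤ) :
    lattice (E * K.map (↑)) = (LinearMap.range K.mulVecLin).toAddSubgroup.map (latticeHom E) := by
  rw [lattice, latticeHom_mul_map, AddMonoidHom.range_comp]
  rfl

theorem latticeHom_injective [DecidableEq ι] {E : Matrix ι ι ℝ} (hE : IsUnit E.det) :
    Function.Injective (latticeHom E) :=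
  (mulVec_injective_iff_isUnit.2 ((isUnit_iff_isUnit_det E).2 hE)).comp
    fun _ _ h => funext fun i => Int.cast_injective (congrFun h i)

theorem relIndex_lattice_mul_map [DecidableEq ι] {E : Matrix ι ι ℝ} (hE : IsUnit E.det)
    (K : Matrix ι ι ℤ) : (lattice (E * K.map (↑))).relIndex (lattice E) = K.det.natAbs := by
  rw [lattice_mul_map, lattice, AddMonoidHom.range_eq_map,
    AddSubgroup.relIndex_map_map_of_injective _ _ (latticeHom_injective hE),
    AddSubgroup.relIndex_top_right, index_range_mulVecLin]

theorem exists_eq_mul_map_of_lattice_le [DecidableEq ι] {E F : Matrix ι ι ℝ}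
    (h : lattice E ≤ lattice F) : ∃ K : Matrix ι ι ℤ, E = F * K.map (↑) := by
  refine exists_eq_mul_map_of_forall_col _ E F fun j => h ⟨Pi.single j 1, ?_⟩
  rw [latticeHom_apply, ← mulVec_single_one]
  congr 1
  ext i
  simp [Pi.single_apply]

theorem abs_det_mul_abs_det_of_lattice_eq_inf_of_lattice_eq_sup [DecidableEq ι]
    {A B C D : Matrix ι ι ℝ} (hA : IsUnit A.det) (hB : IsUnit B.det)
    (hC : lattice C = lattice A ⊓ lattice B) (hD : lattice D = lattice A ⊔ lattice B) :
    |C.det| * |D.det| = |A.det| * |B.det| := by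
  obtain ⟨P, rfl⟩ := exists_eq_mul_map_of_lattice_le (le_sup_left.trans_eq hD.symm)
  obtain ⟨N, rfl⟩ := exists_eq_mul_map_of_lattice_le (hC.trans_le inf_le_right)
  have hDunit : IsUnit D.det := isUnit_of_mul_isUnit_left (det_mul D _ ▸ hA)
  have hPN : P.det.natAbs = N.det.natAbs := by
    rw [← relIndex_lattice_mul_map hDunit, ← relIndex_lattice_mul_map hB, hC, hD,
      AddSubgroup.inf_relIndex_right, AddSubgroup.relIndex_sup_left]
  have habs : |(P.map ((↑) : ℤ → ℝ)).det| = |(N.map ((↑) : ℤ → ℝ)).det| := by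
    rw [← Int.cast_det, ← Int.cast_det, ← Int.cast_abs, ← Int.cast_abs, ← Int.natCast_natAbs,
      ← Int.natCast_natAbs, hPN]
  simp only [det_mul, abs_mul, habs]
  ring

end Matrix

theorem coe_lattice_eq_latt (E : Matrix (Fin 2) (Fin 2) ℝ) : (E.lattice : Set _) = latt E := by
  ext v
  exact exists_congr fun z => eq_comm

theorem csl_dscl_covolume_product_general
    (A B C D : Matrix (Fin 2) (Fin 2) ℝ) (hA : IsUnit A.det) (hB : IsUnit B.det)
    (hC : latt C = latt A ∩ latt B)
    (hD : latt D = {x | ∃ a ∈ latt A, ∃ b ∈ latt B, x = a + b}) :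
    |C.det| * |D.det| = |A.det| * |B.det| := by
  simp only [← coe_lattice_eq_latt] at hC hD
  refine Matrix.abs_det_mul_abs_det_of_lattice_eq_inf_of_lattice_eq_sup hA hB
    (SetLike.coe_injective hC) (SetLike.ext fun x => ?_)
  rw [AddSubgroup.mem_sup, ← SetLike.mem_coe, hD]
  simp only [Set.mem_ofPred_eq, SetLike.mem_coe, eq_comm]

/-- CSL/DSCL covolume duality: `det(C)·det(D) = det(A)·det(B)` where `C` is a structure
matrix of `𝒜 ∩ ℬ` and `D` is a structure matrix of `𝒜 + ℬ` (det = absolute determinant). -/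
theorem csl_dscl_covolume_product
    (A B C D : Matrix (Fin 2) (Fin 2) ℝ) (hA : IsUnit A.det) (hB : IsUnit B.det)
    (hT : IsRatMat (A⁻¹ * B))
    (hC : latt C = latt A ∩ latt B)
    (hD : latt D = {x | ∃ a ∈ latt A, ∃ b ∈ latt B, x = a + b}) :
    |C.det| * |D.det| = |A.det| * |B.det| :=
  csl_dscl_covolume_product_general A B C D hA hB hC hD
end

section
/- With the parallel bases μ·b∥ᵢ = δᵢ·a∥ᵢ (i = 1,2), the vectors c∥ᵢ = (μ/gcd(μ,δᵢ))·b∥ᵢ = (δᵢ/gcd(μ,δᵢ))·a∥ᵢ form a basis of the intersection lattice 𝒞 = 𝒜 ∩ ℬ. -/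
open Matrix

theorem Int.div_gcd_dvd_of_mul_eq_mul {μ d x y : ℤ} (hμ : μ ≠ 0) (h : μ * x = d * y) :
    d / (μ.gcd d : ℤ) ∣ x := by
  have hg : 0 < μ.gcd d := Int.gcd_pos_of_ne_zero_left d hμ
  have hcop : IsCoprime (d / (μ.gcd d : ℤ)) (μ / (μ.gcd d : ℤ)) :=
    (Int.isCoprime_iff_gcd_eq_one.mpr (Int.gcd_div_gcd_div_gcd hg)).symm
  refine hcop.dvd_of_dvd_mul_left ⟨y, mul_right_cancel₀ (Int.natCast_ne_zero.mpr hg.ne') ?_⟩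
  calc μ / (μ.gcd d : ℤ) * x * (μ.gcd d : ℤ) = μ * x := by
        rw [mul_right_comm, Int.ediv_mul_cancel (Int.gcd_dvd_left _ _)]
    _ = d * y := h
    _ = d / (μ.gcd d : ℤ) * y * (μ.gcd d : ℤ) := by
        rw [mul_right_comm, Int.ediv_mul_cancel (Int.gcd_dvd_right _ _)]

lemma intCast_mulVec_intCast {m n R : Type*} [Fintype n] [Ring R] (W : Matrix m n ℤ)
    (z : n → ℤ) : W.map (Int.cast : ℤ → R) *ᵥ (fun i => (z i : R)) = fun i => ((W *ᵥ z) i : R) :=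
  funext fun i => ((Int.castRingHom R).map_mulVec W z i).symm

lemma latt_mul_intCast_subset (M : Matrix (Fin 2) (Fin 2) ℝ) (W : Matrix (Fin 2) (Fin 2) ℤ) :
    latt (M * W.map (Int.cast : ℤ → ℝ)) ⊆ latt M := by
  rintro v ⟨z, rfl⟩
  exact ⟨W *ᵥ z, by rw [← mulVec_mulVec, intCast_mulVec_intCast]⟩

lemma latt_mul_intCast_of_isUnit (M : Matrix (Fin 2) (Fin 2) ℝ) {W : Matrix (Fin 2) (Fin 2) ℤ}
    (hW : IsUnit W.det) : latt (M * W.map (Int.cast : ℤ → ℝ)) = latt M := by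
  have hWW : W.map (Int.cast : ℤ → ℝ) * W⁻¹.map Int.cast = 1 := by
    rw [show (Int.cast : ℤ → ℝ) = ⇑(Int.castRingHom ℝ) from rfl, ← Matrix.map_mul,
      mul_nonsing_inv W hW]
    simp
  refine (latt_mul_intCast_subset M W).antisymm ?_
  conv_lhs => rw [← mul_one M, ← hWW, ← mul_assoc]
  exact latt_mul_intCast_subset _ _

lemma mulVec_mem_latt_mul_diagonal (M : Matrix (Fin 2) (Fin 2) ℝ) {e x : Fin 2 → ℤ}
    (h : ∀ i, e i ∣ x i) : M *ᵥ (fun i => (x i : ℝ)) ∈ latt (M * diagonal fun i => (e i : ℝ)) := by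
  choose z hz using h
  refine ⟨z, ?_⟩
  rw [← mulVec_mulVec]
  congr 1
  funext i
  simp [mulVec_diagonal, hz]

theorem latt_eq_inter_of_parallel {M N C : Matrix (Fin 2) (Fin 2) ℝ} (hM : IsUnit M.det) {μ : ℤ}
    (hμ : μ ≠ 0) {d : Fin 2 → ℤ} (hpar : (μ : ℝ) • N = M * diagonal fun i => (d i : ℝ))
    (hCM : C = M * diagonal fun i => ((d i / μ.gcd (d i) : ℤ) : ℝ))
    (hCN : C = N * diagonal fun i => ((μ / μ.gcd (d i) : ℤ) : ℝ)) :
    latt C = latt M ∩ latt N := by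
  refine subset_antisymm (Set.subset_inter ?_ ?_) ?_
  · rw [hCM, ← diagonal_map Int.cast_zero]
    exact latt_mul_intCast_subset _ _
  · rw [hCN, ← diagonal_map Int.cast_zero]
    exact latt_mul_intCast_subset _ _
  rintro v ⟨⟨x, rfl⟩, ⟨y, hy⟩⟩
  have hxy : ∀ i, μ * x i = d i * y i := by
    have hMinj : Function.Injective M.mulVec :=
      mulVec_injective_iff_isUnit.mpr ((isUnit_iff_isUnit_det M).mpr hM)
    have key : M *ᵥ (fun i => ((μ * x i : ℤ) : ℝ)) = M *ᵥ (fun i => ((d i * y i : ℤ) : ℝ)) :=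
      calc M *ᵥ (fun i => ((μ * x i : ℤ) : ℝ)) = (μ : ℝ) • (N *ᵥ fun i => (y i : ℝ)) := by
            rw [← hy, ← mulVec_smul]; congr 1; funext i; simp
        _ = M *ᵥ (fun i => ((d i * y i : ℤ) : ℝ)) := by
            rw [← smul_mulVec, hpar, ← mulVec_mulVec]; congr 1; funext i; simp [mulVec_diagonal]
    intro i
    exact_mod_cast congrFun (hMinj key) i
  rw [hCM]
  exact mulVec_mem_latt_mul_diagonal M fun i => Int.div_gcd_dvd_of_mul_eq_mul hμ (hxy i)

theorem snf_csl_basis_general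
    (A B : Matrix (Fin 2) (Fin 2) ℝ) (hA : IsUnit A.det)
    (μ : ℤ) (hμ : 0 < μ)
    (U V : Matrix (Fin 2) (Fin 2) ℤ) (hU : IsUnit U.det) (hV : IsUnit V.det)
    (d : Fin 2 → ℤ)
    (Apar Bpar : Matrix (Fin 2) (Fin 2) ℝ)
    (hApar : Apar = A * U.map (Int.cast : ℤ → ℝ))
    (hBpar : Bpar = B * V.map (Int.cast : ℤ → ℝ))
    (hpar : ∀ i j : Fin 2, (μ : ℝ) * Bpar j i = (d i : ℝ) * Apar j i)
    (Cpar : Matrix (Fin 2) (Fin 2) ℝ)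
    (hCpar : ∀ i j : Fin 2,
      Cpar j i = ((μ / Int.gcd μ (d i) : ℤ) : ℝ) * Bpar j i ∧
      Cpar j i = ((d i / Int.gcd μ (d i) : ℤ) : ℝ) * Apar j i) :
    latt Cpar = latt A ∩ latt B := by
  have hAdet : IsUnit Apar.det := by
    rw [hApar, det_mul, ← Int.cast_det]
    exact hA.mul (hU.map (Int.castRingHom ℝ))
  rw [← latt_mul_intCast_of_isUnit A hU, ← hApar, ← latt_mul_intCast_of_isUnit B hV, ← hBpar]
  refine latt_eq_inter_of_parallel hAdet hμ.ne' (d := d) ?_ ?_ ?_ <;> ext j i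
  · simp [mul_diagonal, hpar, mul_comm]
  · simp [mul_diagonal, (hCpar i j).2, mul_comm]
  · simp [mul_diagonal, (hCpar i j).1, mul_comm]

/-- With the parallel bases `μ·b∥ᵢ = δᵢ·a∥ᵢ`, the vectors
`c∥ᵢ = (μ/gcd(μ,δᵢ))·b∥ᵢ = (δᵢ/gcd(μ,δᵢ))·a∥ᵢ` form a basis of the
coincident site lattice `𝒞 = 𝒜 ∩ ℬ`. -/
theorem snf_csl_basis
    (A B : Matrix (Fin 2) (Fin 2) ℝ) (hA : IsUnit A.det) (hB : IsUnit B.det)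
    (μ : ℤ) (hμ : 0 < μ) (P : Matrix (Fin 2) (Fin 2) ℤ)
    (hcop : Int.gcd μ (Int.gcd (Int.gcd (P 0 0) (P 0 1)) (Int.gcd (P 1 0) (P 1 1))) = 1)
    (hT : A⁻¹ * B = ((μ : ℝ))⁻¹ • (P.map (Int.cast : ℤ → ℝ)))
    (U V : Matrix (Fin 2) (Fin 2) ℤ) (hU : IsUnit U.det) (hV : IsUnit V.det)
    (d : Fin 2 → ℤ) (hd : d 0 ∣ d 1)
    (hSNF : P = U * Matrix.diagonal d * V⁻¹)
    (Apar Bpar : Matrix (Fin 2) (Fin 2) ℝ)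
    (hApar : Apar = A * U.map (Int.cast : ℤ → ℝ))
    (hBpar : Bpar = B * V.map (Int.cast : ℤ → ℝ))
    (hpar : ∀ i j : Fin 2, (μ : ℝ) * Bpar j i = (d i : ℝ) * Apar j i)
    (Cpar : Matrix (Fin 2) (Fin 2) ℝ)
    (hCpar : ∀ i j : Fin 2,
      Cpar j i = ((μ / Int.gcd μ (d i) : ℤ) : ℝ) * Bpar j i ∧
      Cpar j i = ((d i / Int.gcd μ (d i) : ℤ) : ℝ) * Apar j i) :
    latt Cpar = latt A ∩ latt B :=
  snf_csl_basis_general A B hA μ hμ U V hU hV d Apar Bpar hApar hBpar hpar Cpar hCpar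
end

section
/- Let 𝒜, ℬ be 2D lattices and F ∈ GL(2,ℝ). Then 𝒜 ∩ Fℬ is a full-rank lattice if and only if there exist linearly independent q₁, r₁ ∈ ℬ, vectors q₂, r₂ ∈ 𝒜, and nonzero rationals α, β such that q₂ = α F q₁ and r₂ = β F r₁. Moreover in that case F = (1/α) q₂ ⊗ 𝓺₁ + (1/β) r₂ ⊗ 𝓻₁, where 𝓺₁, 𝓻₁ is the basis of ℝ² dual to q₁, r₁ (𝓺₁·q₁ = 𝓻₁·r₁ = 1, 𝓺₁·r₁ = 𝓻₁·q₁ = 0). -/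
open Matrix

lemma latt_smul_int (M : Matrix (Fin 2) (Fin 2) ℝ) {v : Fin 2 → ℝ}
    (h : v ∈ latt M) (n : ℤ) : (n : ℝ) • v ∈ latt M := by
  obtain ⟨z, rfl⟩ := h
  refine ⟨n • z, ?_⟩
  have hc : (fun i => (((n • z) i : ℤ) : ℝ)) = (n : ℝ) • fun i => ((z i : ℤ) : ℝ) := by
    funext i
    simp [mul_comm]
  rw [hc, mulVec_smul]

lemma mulVec_eq_zero' {F : Matrix (Fin 2) (Fin 2) ℝ} (hF : IsUnit F.det)
    {x : Fin 2 → ℝ} (h : F.mulVec x = 0) : x = 0 := by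
  have := congrArg (F⁻¹.mulVec) h
  rwa [mulVec_mulVec, Matrix.nonsing_inv_mul F hF, one_mulVec, mulVec_zero] at this

/-- Coincidence criterion for heterodeformations: `𝒜 ∩ F𝓑` is a full-rank lattice iff
there exist linearly independent `q₁, r₁ ∈ ℬ`, vectors `q₂, r₂ ∈ 𝒜` and nonzero
rationals `α, β` with `q₂ = αFq₁`, `r₂ = βFr₁`; and in that case
`F = (1/α) q₂ ⊗ 𝓺₁ + (1/β) r₂ ⊗ 𝓻₁` in terms of the dual basis `𝓺₁, 𝓻₁` of `q₁, r₁`. -/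
theorem coincidence_criterion_heterodeformation
    (A B F : Matrix (Fin 2) (Fin 2) ℝ) (hA : IsUnit A.det) (hB : IsUnit B.det)
    (hF : IsUnit F.det) :
    (FullRankSet (latt A ∩ {x | ∃ b ∈ latt B, x = F.mulVec b}) ↔
      ∃ q₁ ∈ latt B, ∃ r₁ ∈ latt B, ∃ q₂ ∈ latt A, ∃ r₂ ∈ latt A,
        ∃ α β : ℚ, α ≠ 0 ∧ β ≠ 0 ∧ LinearIndependent ℝ ![q₁, r₁] ∧
          q₂ = (α : ℝ) • F.mulVec q₁ ∧ r₂ = (β : ℝ) • F.mulVec r₁) ∧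
    (∀ q₁ ∈ latt B, ∀ r₁ ∈ latt B, ∀ q₂ ∈ latt A, ∀ r₂ ∈ latt A,
      ∀ α β : ℚ, α ≠ 0 → β ≠ 0 → LinearIndependent ℝ ![q₁, r₁] →
        q₂ = (α : ℝ) • F.mulVec q₁ → r₂ = (β : ℝ) • F.mulVec r₁ →
        ∀ dq dr : Fin 2 → ℝ,
          dq ⬝ᵥ q₁ = 1 → dr ⬝ᵥ r₁ = 1 → dq ⬝ᵥ r₁ = 0 → dr ⬝ᵥ q₁ = 0 →
          F = Matrix.of fun i j =>
            (1 / (α : ℝ)) * q₂ i * dq j + (1 / (β : ℝ)) * r₂ i * dr j) := by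
  constructor
  · constructor
    · rintro ⟨v, ⟨hvA, bv, hbvB, rfl⟩, w, ⟨hwA, bw, hbwB, rfl⟩, hvw⟩
      refine ⟨bv, hbvB, bw, hbwB, F.mulVec bv, hvA, F.mulVec bw, hwA, 1, 1,
        one_ne_zero, one_ne_zero, ?_, by simp, by simp⟩
      rw [LinearIndependent.pair_iff] at hvw ⊢
      intro s t hst
      apply hvw
      have h0 : F.mulVec (s • bv + t • bw) = 0 := by rw [hst, mulVec_zero]
      rw [mulVec_add, mulVec_smul, mulVec_smul] at h0
      exact h0
    · rintro ⟨q₁, hq₁, r₁, hr₁, q₂, hq₂, r₂, hr₂, α, β, hα, hβ, hind, hqe, hre⟩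
      set v := ((α.den : ℤ) : ℝ) • q₂ with hv
      set w := ((β.den : ℤ) : ℝ) • r₂ with hw
      have hvA : v ∈ latt A := latt_smul_int A hq₂ _
      have hwA : w ∈ latt A := latt_smul_int A hr₂ _
      have hca : ((α.den : ℝ)) * (α : ℝ) = ((α.num : ℤ) : ℝ) := by
        rw [mul_comm]
        exact_mod_cast congrArg (fun q : ℚ => (q : ℝ)) (Rat.mul_den_eq_num α)
      have hcb : ((β.den : ℝ)) * (β : ℝ) = ((β.num : ℤ) : ℝ) := by
        rw [mul_comm]
        exact_mod_cast congrArg (fun q : ℚ => (q : ℝ)) (Rat.mul_den_eq_num β)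
      have hvmem : v = F.mulVec (((α.num : ℤ) : ℝ) • q₁) := by
        rw [hv, hqe, mulVec_smul, smul_smul]
        push_cast
        push_cast at hca
        rw [hca]
      have hwmem : w = F.mulVec (((β.num : ℤ) : ℝ) • r₁) := by
        rw [hw, hre, mulVec_smul, smul_smul]
        push_cast
        push_cast at hcb
        rw [hcb]
      have hna : ((α.num : ℤ) : ℝ) ≠ 0 := by
        exact_mod_cast Rat.num_ne_zero.mpr hα
      have hnb : ((β.num : ℤ) : ℝ) ≠ 0 := by
        exact_mod_cast Rat.num_ne_zero.mpr hβ
      refine ⟨v, ⟨hvA, _, latt_smul_int B hq₁ α.num, hvmem⟩,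
        w, ⟨hwA, _, latt_smul_int B hr₁ β.num, hwmem⟩, ?_⟩
      rw [LinearIndependent.pair_iff] at hind ⊢
      intro s t hst
      rw [hvmem, hwmem] at hst
      have h0' : F.mulVec ((s * ((α.num : ℤ) : ℝ)) • q₁ + (t * ((β.num : ℤ) : ℝ)) • r₁) = 0 := by
        simp only [mulVec_add, mulVec_smul, smul_smul] at hst ⊢
        exact hst
      have h0 := mulVec_eq_zero' hF h0'
      obtain ⟨h1, h2⟩ := hind _ _ h0
      constructor
      · rcases mul_eq_zero.mp h1 with h | h
        · exact h
        · exact absurd h hna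
      · rcases mul_eq_zero.mp h2 with h | h
        · exact h
        · exact absurd h hnb
  · intro q₁ hq₁ r₁ hr₁ q₂ hq₂ r₂ hr₂ α β hα hβ hind hqe hre dq dr h1 h2 h3 h4
    have hα' : (α : ℝ) ≠ 0 := by exact_mod_cast hα
    have hβ' : (β : ℝ) ≠ 0 := by exact_mod_cast hβ
    set C : Matrix (Fin 2) (Fin 2) ℝ := (Matrix.of ![q₁, r₁])ᵀ with hC
    set D : Matrix (Fin 2) (Fin 2) ℝ := Matrix.of ![dq, dr] with hD
    have hd1 : dq 0 * q₁ 0 + dq 1 * q₁ 1 = 1 := by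
      simpa [dotProduct, Fin.sum_univ_two] using h1
    have hd2 : dr 0 * r₁ 0 + dr 1 * r₁ 1 = 1 := by
      simpa [dotProduct, Fin.sum_univ_two] using h2
    have hd3 : dq 0 * r₁ 0 + dq 1 * r₁ 1 = 0 := by
      simpa [dotProduct, Fin.sum_univ_two] using h3
    have hd4 : dr 0 * q₁ 0 + dr 1 * q₁ 1 = 0 := by
      simpa [dotProduct, Fin.sum_univ_two] using h4
    have hDC : D * C = 1 := by
      ext i j
      fin_cases i <;> fin_cases j <;>
        simp [hC, hD, Matrix.mul_apply, Fin.sum_univ_two, Matrix.one_apply,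
          Matrix.transpose_apply, Matrix.vecHead, Matrix.vecTail, hd1, hd2, hd3, hd4]
    have hCD : C * D = 1 := mul_eq_one_comm.mp hDC
    have key : F = F * C * D := by rw [Matrix.mul_assoc, hCD, Matrix.mul_one]
    ext i j
    rw [hqe, hre]
    have hFij : F i j = (F * C * D) i j := by rw [← key]
    rw [hFij]
    simp only [Matrix.mul_apply, Fin.sum_univ_two, hC, hD, Matrix.of_apply,
      Matrix.transpose_apply, Matrix.cons_val_zero, Matrix.cons_val_one, Matrix.head_cons,
      Pi.smul_apply, smul_eq_mul, Matrix.mulVec, dotProduct]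
    field_simp
end
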